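/- arXiv:2209.07773 — 5 statements merged into one kernel-verified Lean document; each statement's English description precedes it below -/
import Mathlib

section
/- Let l, b̂ ∈ ℝ and let a, q, s, u, γ, w : ℝ → ℝ be functions such that at a point t the functions a, q, s are differentiable with a′(t) = q(t) + b̂·u(t), q′(t) = w(t), and s′(t) = −l·s(t) − l²·a(t) − l·b̂·γ(t). Define q̂ := s + l·a, the observation error e₁ := q − q̂, and the sampling error ψ := γ − u. Then e₁ is differentiable at t and e₁′(t) = −l·e₁(t) + l·b̂·ψ(t) + w(t). -/
/-- Observation-error dynamics of the extended state observer: if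
`a' = q + bhat·u`, `q' = w`, `s' = -l·s - l²·a - l·bhat·γ` at `t`, then the
observation error `e₁ = q - (s + l·a)` satisfies
`e₁' = -l·e₁ + l·bhat·ψ + w` at `t`, where `ψ = γ - u`. -/
theorem stmt_0 (l bhat : ℝ) (a q s u γ w : ℝ → ℝ) (t : ℝ)
    (ha : HasDerivAt a (q t + bhat * u t) t)
    (hq : HasDerivAt q (w t) t)
    (hs : HasDerivAt s (-l * s t - l ^ 2 * a t - l * bhat * γ t) t) :
    HasDerivAt (fun τ => q τ - (s τ + l * a τ))
      (-l * (q t - (s t + l * a t)) + l * bhat * (γ t - u t) + w t) t :=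
  (hq.sub (hs.add (ha.const_mul l))).congr_deriv (by ring)
end

section
/- Let λ > 0 and c ≥ 0, and let f : ℝ → ℝ be differentiable on [0, ∞) with f(t)·f′(t) ≤ −λ·f(t)² + c·|f(t)| for all t ≥ 0. Then for all t ≥ 0, |f(t)| ≤ (|f(0)| − c/λ)·e^{−λt} + c/λ. -/
/-!
Compare `f` and `-f` separately with `y + ε`, where `y` solves `y' = -λ y + c`, `y 0 = |f 0|`.
At a first contact point `g x = y x + ε > 0`, so dividing `g g' ≤ -λ g² + c |g|` by `g x` gives
`g' x ≤ -λ g x + c < (y + ε)' x`, which the fencing theorem excludes. Then let `ε → 0`.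
-/

open Set Real

noncomputable def comparisonSolution (lam c y₀ t : ℝ) : ℝ :=
  (y₀ - c / lam) * exp (-lam * t) + c / lam

section comparisonSolution

variable {lam c y₀ : ℝ}

theorem hasDerivAt_comparisonSolution (hlam : lam ≠ 0) (t : ℝ) :
    HasDerivAt (comparisonSolution lam c y₀) (-lam * comparisonSolution lam c y₀ t + c) t := by
  refine ((((hasDerivAt_id t).const_mul (-lam)).exp.const_mul (y₀ - c / lam)).add_const
    (c / lam)).congr_deriv ?_
  simp only [comparisonSolution, id]
  field_simp
  ring

theorem comparisonSolution_zero : comparisonSolution lam c y₀ 0 = y₀ := by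
  simp [comparisonSolution]

theorem comparisonSolution_nonneg (hlam : 0 < lam) (hc : 0 ≤ c) (hy₀ : 0 ≤ y₀) {t : ℝ}
    (ht : 0 ≤ t) : 0 ≤ comparisonSolution lam c y₀ t := by
  have hexp : exp (-lam * t) ≤ 1 := exp_le_one_iff.2 (by nlinarith)
  have hsplit : comparisonSolution lam c y₀ t =
      y₀ * exp (-lam * t) + c / lam * (1 - exp (-lam * t)) := by
    simp only [comparisonSolution]; ring
  rw [hsplit]
  have := exp_pos (-lam * t)
  have := div_nonneg hc hlam.le
  positivity

end comparisonSolution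

theorem le_neg_mul_add_of_mul_le {lam c x x' : ℝ} (hx : 0 < x)
    (h : x * x' ≤ -lam * x ^ 2 + c * |x|) : x' ≤ -lam * x + c := by
  rw [abs_of_pos hx] at h
  nlinarith

section Fencing

variable {lam c y₀ : ℝ} {g g' : ℝ → ℝ}

theorem le_comparisonSolution_add (hlam : 0 < lam) (hc : 0 ≤ c) (hy₀ : 0 ≤ y₀)
    (hg : ∀ t ∈ Ici (0 : ℝ), HasDerivWithinAt g (g' t) (Ici 0) t) (hg₀ : g 0 ≤ y₀)
    (hg' : ∀ t ≥ (0 : ℝ), 0 < g t → g' t ≤ -lam * g t + c) {ε : ℝ} (hε : 0 < ε)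
    {t : ℝ} (ht : 0 ≤ t) : g t ≤ comparisonSolution lam c y₀ t + ε := by
  refine image_le_of_deriv_right_lt_deriv_boundary (a := 0) (b := t)
    (B' := fun x => -lam * comparisonSolution lam c y₀ x + c)
    (fun x hx => (hg x hx.1).continuousWithinAt.mono fun _ hy => hy.1)
    (fun x hx => (hg x hx.1).mono (Ici_subset_Ici.2 hx.1))
    (by rw [comparisonSolution_zero]; linarith)
    (fun x => (hasDerivAt_comparisonSolution hlam.ne' x).add_const ε) ?_ ⟨ht, le_rfl⟩
  intro x hx hcontact
  have hpos : 0 < g x := by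
    rw [hcontact]
    linarith [comparisonSolution_nonneg hlam hc hy₀ hx.1]
  have hslope := hg' x hx.1 hpos
  rw [hcontact] at hslope
  nlinarith

theorem le_comparisonSolution (hlam : 0 < lam) (hc : 0 ≤ c) (hy₀ : 0 ≤ y₀)
    (hg : ∀ t ∈ Ici (0 : ℝ), HasDerivWithinAt g (g' t) (Ici 0) t) (hg₀ : g 0 ≤ y₀)
    (hg' : ∀ t ≥ (0 : ℝ), 0 < g t → g' t ≤ -lam * g t + c) {t : ℝ} (ht : 0 ≤ t) :
    g t ≤ comparisonSolution lam c y₀ t :=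
  le_of_forall_pos_le_add fun _ hε => le_comparisonSolution_add hlam hc hy₀ hg hg₀ hg' hε ht

end Fencing

/-- Scalar comparison lemma: if `f·f' ≤ -λ·f² + c·|f|` on `[0, ∞)`, then
`|f(t)| ≤ (|f(0)| - c/λ)·e^{-λt} + c/λ` for all `t ≥ 0`. -/
theorem stmt_2 (lam c : ℝ) (hlam : 0 < lam) (hc : 0 ≤ c) (f f' : ℝ → ℝ)
    (hderiv : ∀ t ∈ Set.Ici (0 : ℝ), HasDerivWithinAt f (f' t) (Set.Ici 0) t)
    (hineq : ∀ t ≥ (0 : ℝ), f t * f' t ≤ -lam * (f t) ^ 2 + c * |f t|) :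
    ∀ t ≥ (0 : ℝ), |f t| ≤ (|f 0| - c / lam) * Real.exp (-lam * t) + c / lam := by
  intro t ht
  refine abs_le'.2 ⟨?_, ?_⟩
  · exact le_comparisonSolution hlam hc (abs_nonneg _) hderiv (le_abs_self _)
      (fun s hs hpos => le_neg_mul_add_of_mul_le hpos (hineq s hs)) ht
  · refine le_comparisonSolution (g := fun s => -f s) hlam hc (abs_nonneg _)
      (fun s hs => (hderiv s hs).neg) (neg_le_abs _) (fun s hs hpos => ?_) ht
    refine le_neg_mul_add_of_mul_le hpos ?_
    rw [neg_mul_neg, neg_sq, abs_neg]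
    exact hineq s hs
end

section
/- Let l, b̂, c₁, c₂, c̄, ē be real numbers with b̂ > 0, c₁ ≥ 0, c₂ ≥ 0, 0 ≤ c̄ < 1, ē > 0, and l > (c₁ + c₂·ē)/((1 − c̄)·ē). Set M := (ē·(l − c₂ − c̄·l) − c₁)/(l·b̂·(1 + c̄)). Let e₁, ψ, w : ℝ → ℝ with e₁ differentiable on [0, ∞), e₁′(t) = −l·e₁(t) + l·b̂·ψ(t) + w(t), |w(t)| ≤ c₁ + c₂·|e₁(t)| + c̄·l·|e₁(t)| + c̄·l·b̂·|ψ(t)|, and |ψ(t)| ≤ M for all t ≥ 0. If |e₁(0)| ≤ ē, then |e₁(t)| ≤ ē for all t ≥ 0. -/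
/-!
`V = e₁² / 2` is a Lyapunov function: the threshold `M` is chosen exactly so that, writing
`k = l - c₂ - c̄ l > 0`, the error dynamics give `e₁ e₁' ≤ -k |e₁| (|e₁| - ē)`. Hence the
trajectory always points inward when it is outside `[-ē, ē]`, and a barrier argument on the
slightly enlarged fences `±(ē + η)` keeps it inside.
-/

open Set

theorem le_of_hasDerivWithinAt_Ici_of_deriv_neg {f f' : ℝ → ℝ} {a B : ℝ}
    (hf : ∀ x ∈ Ici a, HasDerivWithinAt f (f' x) (Ici a) x) (ha : f a ≤ B)
    (hneg : ∀ x ∈ Ici a, B < f x → f' x < 0) : ∀ x ∈ Ici a, f x ≤ B := by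
  intro t ht
  refine le_of_forall_pos_le_add fun η hη => ?_
  have hcont : ContinuousOn f (Icc a t) := fun x hx =>
    (hf x hx.1).continuousWithinAt.mono Icc_subset_Ici_self
  have hf' : ∀ x ∈ Ico a t, HasDerivWithinAt f (f' x) (Ici x) x := fun x hx =>
    (hf x hx.1).mono (Ici_subset_Ici.2 hx.1)
  refine image_le_of_deriv_right_lt_deriv_boundary (B := fun _ => B + η) (B' := fun _ => 0)
    hcont hf' (by linarith) (fun x => hasDerivAt_const x _) ?_ ⟨ht, le_rfl⟩
  intro x hx hfx
  exact hneg x hx.1 (by simp only [hfx]; linarith)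

theorem abs_le_of_hasDerivWithinAt_Ici {f f' : ℝ → ℝ} {a B : ℝ}
    (hf : ∀ x ∈ Ici a, HasDerivWithinAt f (f' x) (Ici a) x) (ha : |f a| ≤ B)
    (hinward : ∀ x ∈ Ici a, B < |f x| → f x * f' x < 0) : ∀ x ∈ Ici a, |f x| ≤ B := by
  have hB : 0 ≤ B := (abs_nonneg _).trans ha
  have hupper := le_of_hasDerivWithinAt_Ici_of_deriv_neg hf (le_abs_self _ |>.trans ha)
    fun x hx hfx =>
      neg_of_mul_neg_right (hinward x hx (hfx.trans_le (le_abs_self _))) (by linarith)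
  have hlower := le_of_hasDerivWithinAt_Ici_of_deriv_neg (f := fun x => -f x)
    (f' := fun x => -f' x) (fun x hx => (hf x hx).neg) (neg_le_abs _ |>.trans ha)
    fun x hx hfx =>
      neg_neg_of_pos
        (pos_of_mul_neg_right (hinward x hx (hfx.trans_le (neg_le_abs _))) (by linarith))
  exact fun x hx => abs_le.2 ⟨by linarith [hlower x hx], hupper x hx⟩

theorem mul_eso_error_deriv_le {l bhat c₁ c₂ cbar M e ψ w : ℝ} (hl : 0 ≤ l) (hb : 0 ≤ bhat)
    (hcbar : 0 ≤ cbar)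
    (hw : |w| ≤ c₁ + c₂ * |e| + cbar * l * |e| + cbar * l * bhat * |ψ|) (hψ : |ψ| ≤ M) :
    e * (-l * e + l * bhat * ψ + w) ≤
      -(l - c₂ - cbar * l) * |e| ^ 2 + |e| * (c₁ + (1 + cbar) * (l * bhat * M)) := by
  have hdrive : |l * bhat * ψ + w| ≤ c₁ + (c₂ + cbar * l) * |e| + (1 + cbar) * (l * bhat * M) :=
    calc |l * bhat * ψ + w| ≤ l * bhat * |ψ| + |w| := by
          simpa only [abs_mul, abs_of_nonneg hl, abs_of_nonneg hb] using abs_add_le (l * bhat * ψ) w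
      _ ≤ c₁ + (c₂ + cbar * l) * |e| + (1 + cbar) * (l * bhat * |ψ|) := by linarith
      _ ≤ _ := by gcongr
  have hcross : e * (l * bhat * ψ + w) ≤ |e| * |l * bhat * ψ + w| := by
    rw [← abs_mul]; exact le_abs_self _
  have hsq : e * e = |e| ^ 2 := by rw [sq_abs, sq]
  nlinarith [abs_nonneg e]

/-- Core of Lemma 1: boundedness of the ESO observation error under the
event-triggered mechanism. -/
theorem stmt_3 (l bhat c₁ c₂ cbar ebar : ℝ) (hb : 0 < bhat) (hc₁ : 0 ≤ c₁) (hc₂ : 0 ≤ c₂)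
    (hcbar0 : 0 ≤ cbar) (hcbar1 : cbar < 1) (hebar : 0 < ebar)
    (hl : (c₁ + c₂ * ebar) / ((1 - cbar) * ebar) < l)
    (e₁ ψ w : ℝ → ℝ)
    (hderiv : ∀ t ∈ Set.Ici (0 : ℝ),
      HasDerivWithinAt e₁ (-l * e₁ t + l * bhat * ψ t + w t) (Set.Ici 0) t)
    (hw : ∀ t ≥ (0 : ℝ),
      |w t| ≤ c₁ + c₂ * |e₁ t| + cbar * l * |e₁ t| + cbar * l * bhat * |ψ t|)
    (hψ : ∀ t ≥ (0 : ℝ),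
      |ψ t| ≤ (ebar * (l - c₂ - cbar * l) - c₁) / (l * bhat * (1 + cbar)))
    (h0 : |e₁ 0| ≤ ebar) :
    ∀ t ≥ (0 : ℝ), |e₁ t| ≤ ebar := by
  have hmargin : c₁ + c₂ * ebar < l * ((1 - cbar) * ebar) :=
    (div_lt_iff₀ (mul_pos (sub_pos.2 hcbar1) hebar)).1 hl
  have hl0 : 0 < l := by
    nlinarith [mul_pos (sub_pos.2 hcbar1) hebar, mul_nonneg hc₂ hebar.le]
  have hrate : 0 < l - c₂ - cbar * l := by nlinarith
  have hthreshold : c₁ + (1 + cbar) * (l * bhat *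
      ((ebar * (l - c₂ - cbar * l) - c₁) / (l * bhat * (1 + cbar)))) =
      ebar * (l - c₂ - cbar * l) := by
    field_simp; ring
  refine abs_le_of_hasDerivWithinAt_Ici hderiv h0 fun x hx hout => ?_
  have hV := mul_eso_error_deriv_le hl0.le hb.le hcbar0 (hw x hx) (hψ x hx)
  rw [hthreshold] at hV
  nlinarith [mul_pos (mul_pos hrate (hebar.trans hout)) (sub_pos.2 hout)]
end

section
/- Let l, b̂, c₁, c₂, c̄, ē be real numbers with b̂ > 0, c₁ ≥ 0, c₂ ≥ 0, 0 ≤ c̄ < 1, ē > 0, and l > (c₁ + c₂·ē)/((1 − c̄)·ē). Set M := (ē·(l − c₂ − c̄·l) − c₁)/(l·b̂·(1 + c̄)). Let e₁, ψ, w : ℝ → ℝ with e₁ differentiable on [0, ∞), e₁′(t) = −l·e₁(t) + l·b̂·ψ(t) + w(t), |w(t)| ≤ c₁ + c₂·|e₁(t)| + c̄·l·|e₁(t)| + c̄·l·b̂·|ψ(t)|, and |ψ(t)| ≤ M for all t ≥ 0. Then for all t ≥ 0, |e₁(t)| ≤ (|e₁(0)| − ē)·e^{−(l − c₂ − c̄·l)·t}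 + ē. -/
/-!
Away from the zeros of `e₁` the function `|e₁|` is differentiable with derivative
`sign e₁ · ė₁`, and at a zero its right Dini derivative is at most `|ė₁|`. The growth bound on
`w` together with `|ψ| ≤ M` makes each of these at most `-A |e₁| + A ē`, with
`A = l - c₂ - c̄ l > 0`; the choice of `M` is exactly what balances the constant term. Grönwall's
inequality for the Dini derivative then gives `|e₁ t| ≤ (|e₁ 0| - ē) e^{-A t} + ē`.
-/

open Set Filter Topology

theorem HasDerivWithinAt.frequently_slope_abs_lt {f : ℝ → ℝ} {f' x r : ℝ}
    (hf : HasDerivWithinAt f f' (Ici x) x) (hpos : 0 ≤ f x → f' < r) (hneg : f x ≤ 0 → -f' < r) :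
    ∃ᶠ z in 𝓝[>] x, (z - x)⁻¹ * (|f z| - |f x|) < r := by
  rcases lt_trichotomy (f x) 0 with h | h | h
  · simpa [slope_def_module] using
      ((hasDerivAt_abs_neg h).comp_hasDerivWithinAt x hf).liminf_right_slope_le
        (by simpa using hneg h.le)
  · exact hf.liminf_right_slope_norm_le (abs_lt.2 ⟨by linarith [hneg h.le], hpos h.ge⟩)
  · simpa [slope_def_module] using
      ((hasDerivAt_abs_pos h).comp_hasDerivWithinAt x hf).liminf_right_slope_le
        (by simpa using hpos h.le)

theorem gronwallBound_neg_mul {δ A e : ℝ} (hA : A ≠ 0) (x : ℝ) :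
    gronwallBound δ (-A) (A * e) x = (δ - e) * Real.exp (-A * x) + e := by
  rw [gronwallBound_of_K_ne_0 (neg_ne_zero.2 hA)]
  field_simp
  ring

theorem observer_error_drift_le {l bhat c₁ c₂ cbar ebar e ψ w : ℝ} (hlb : 0 ≤ l * bhat)
    (hw : |w| ≤ c₁ + c₂ * |e| + cbar * l * |e| + cbar * l * bhat * |ψ|)
    (hψ : (1 + cbar) * (l * bhat * |ψ|) + c₁ ≤ (l - c₂ - cbar * l) * ebar) :
    (0 ≤ e → -l * e + l * bhat * ψ + w ≤
        -(l - c₂ - cbar * l) * |e| + (l - c₂ - cbar * l) * ebar) ∧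
      (e ≤ 0 → -(-l * e + l * bhat * ψ + w) ≤
        -(l - c₂ - cbar * l) * |e| + (l - c₂ - cbar * l) * ebar) := by
  have hψ_abs : l * bhat * ψ ≤ l * bhat * |ψ| := mul_le_mul_of_nonneg_left (le_abs_self ψ) hlb
  have hψ_neg : -(l * bhat * ψ) ≤ l * bhat * |ψ| := by
    nlinarith [mul_le_mul_of_nonneg_left (neg_le_abs ψ) hlb]
  refine ⟨fun he => ?_, fun he => ?_⟩
  · rw [abs_of_nonneg he] at hw ⊢
    nlinarith [le_abs_self w]
  · rw [abs_of_nonpos he] at hw ⊢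
    nlinarith [neg_le_abs w]

/-- Explicit exponential bound (A.6) on the ESO observation error. -/
theorem stmt_4 (l bhat c₁ c₂ cbar ebar : ℝ) (hb : 0 < bhat) (hc₁ : 0 ≤ c₁) (hc₂ : 0 ≤ c₂)
    (hcbar0 : 0 ≤ cbar) (hcbar1 : cbar < 1) (hebar : 0 < ebar)
    (hl : (c₁ + c₂ * ebar) / ((1 - cbar) * ebar) < l)
    (e₁ ψ w : ℝ → ℝ)
    (hderiv : ∀ t ∈ Set.Ici (0 : ℝ),
      HasDerivWithinAt e₁ (-l * e₁ t + l * bhat * ψ t + w t) (Set.Ici 0) t)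
    (hw : ∀ t ≥ (0 : ℝ),
      |w t| ≤ c₁ + c₂ * |e₁ t| + cbar * l * |e₁ t| + cbar * l * bhat * |ψ t|)
    (hψ : ∀ t ≥ (0 : ℝ),
      |ψ t| ≤ (ebar * (l - c₂ - cbar * l) - c₁) / (l * bhat * (1 + cbar))) :
    ∀ t ≥ (0 : ℝ),
      |e₁ t| ≤ (|e₁ 0| - ebar) * Real.exp (-(l - c₂ - cbar * l) * t) + ebar := by
  intro t ht
  set A := l - c₂ - cbar * l
  have hden : 0 < (1 - cbar) * ebar := mul_pos (by linarith) hebar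
  have hgain : c₁ + c₂ * ebar < l * ((1 - cbar) * ebar) := (div_lt_iff₀ hden).1 hl
  have hl0 : 0 < l := pos_of_mul_pos_left (by linarith [mul_nonneg hc₂ hebar.le]) hden.le
  have hA : 0 < A := pos_of_mul_pos_left (by linarith : 0 < A * ebar) hebar.le
  have hψ' : ∀ s ≥ (0 : ℝ), (1 + cbar) * (l * bhat * |ψ s|) + c₁ ≤ A * ebar := fun s hs => by
    have := (le_div_iff₀ (by positivity)).1 (hψ s hs)
    linarith
  have hcont : ContinuousOn e₁ (Icc 0 t) := fun x hx =>
    (hderiv x hx.1).continuousWithinAt.mono fun _ hz => hz.1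
  have hslope : ∀ x ∈ Ico 0 t, ∀ r, -A * |e₁ x| + A * ebar < r →
      ∃ᶠ z in 𝓝[>] x, (z - x)⁻¹ * (|e₁ z| - |e₁ x|) < r := fun x hx r hr => by
    obtain ⟨hpos, hneg⟩ := observer_error_drift_le (by positivity) (hw x hx.1) (hψ' x hx.1)
    exact ((hderiv x hx.1).mono (Ici_subset_Ici.2 hx.1)).frequently_slope_abs_lt
      (fun h => (hpos h).trans_lt hr) (fun h => (hneg h).trans_lt hr)
  have := le_gronwallBound_of_liminf_deriv_right_le hcont.abs hslope le_rfl
    (fun _ _ => le_rfl) t ⟨ht, le_rfl⟩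
  rwa [sub_zero, gronwallBound_neg_mul hA.ne'] at this
end

section
/- Let l > 0, B > 0, M > 0 and t₀ < t₁ be real numbers. Let u : ℝ → ℝ be differentiable on [t₀, t₁] and set ψ(t) := u(t₀) − u(t). Assume |u′(t)| ≤ l·|ψ(t)| + B and |ψ(t)| ≤ M for all t ∈ [t₀, t₁], and |ψ(t₁)| ≥ M. Then t₁ − t₀ ≥ M/(l·M + B). -/
/-! A function whose speed on `[t₀, t₁]` is at most `C` moves by at most `C (t₁ - t₀)`
(mean value inequality). While `|ψ| ≤ M`, the derivative bound gives speed at most `l M + B`,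
and `ψ` has to travel distance `M` before the next event, so `t₁ - t₀ ≥ M / (l M + B)`. -/

open Set

theorem div_le_sub_of_norm_hasDerivWithinAt_le {E : Type*} [NormedAddCommGroup E]
    [NormedSpace ℝ E] {f f' : ℝ → E} {a b C M : ℝ} (hab : a ≤ b)
    (hf : ∀ t ∈ Icc a b, HasDerivWithinAt f (f' t) (Icc a b) t)
    (hbound : ∀ t ∈ Icc a b, ‖f' t‖ ≤ C) (hM : M ≤ ‖f b - f a‖) :
    M / C ≤ b - a := by
  have hC : 0 ≤ C := (norm_nonneg _).trans (hbound a (left_mem_Icc.2 hab))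
  have hdist : ‖f b - f a‖ ≤ C * (b - a) :=
    norm_image_sub_le_of_norm_deriv_le_segment' hf (fun t ht ↦ hbound t (Ico_subset_Icc_self ht))
      b (right_mem_Icc.2 hab)
  exact div_le_of_le_mul₀ hC (sub_nonneg.2 hab) (by linarith)

theorem stmt_14_general (l B M t₀ t₁ : ℝ) (hl : 0 < l)
    (ht : t₀ < t₁) (u u' : ℝ → ℝ)
    (hderiv : ∀ t ∈ Set.Icc t₀ t₁, HasDerivWithinAt u (u' t) (Set.Icc t₀ t₁) t)
    (hbound : ∀ t ∈ Set.Icc t₀ t₁, |u' t| ≤ l * |u t₀ - u t| + B)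
    (hψ : ∀ t ∈ Set.Icc t₀ t₁, |u t₀ - u t| ≤ M)
    (hend : M ≤ |u t₀ - u t₁|) :
    M / (l * M + B) ≤ t₁ - t₀ := by
  have hspeed : ∀ t ∈ Icc t₀ t₁, ‖u' t‖ ≤ l * M + B := fun t ht ↦
    calc ‖u' t‖ ≤ l * |u t₀ - u t| + B := hbound t ht
      _ ≤ l * M + B := by gcongr; exact hψ t ht
  refine div_le_sub_of_norm_hasDerivWithinAt_le ht.le hderiv hspeed ?_
  rwa [Real.norm_eq_abs, abs_sub_comm]

/-- Exclusion of Zeno behavior: the inter-event time is bounded below by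
`M/(lM + B)`. -/
theorem stmt_14 (l B M t₀ t₁ : ℝ) (hl : 0 < l) (hB : 0 < B) (hM : 0 < M)
    (ht : t₀ < t₁) (u u' : ℝ → ℝ)
    (hderiv : ∀ t ∈ Set.Icc t₀ t₁, HasDerivWithinAt u (u' t) (Set.Icc t₀ t₁) t)
    (hbound : ∀ t ∈ Set.Icc t₀ t₁, |u' t| ≤ l * |u t₀ - u t| + B)
    (hψ : ∀ t ∈ Set.Icc t₀ t₁, |u t₀ - u t| ≤ M)
    (hend : M ≤ |u t₀ - u t₁|) :
    M / (l * M + B) ≤ t₁ - t₀ :=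
  stmt_14_general l B M t₀ t₁ hl ht u u' hderiv hbound hψ hend
end
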